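/- Uncertainty relation for standard and Hadamard basis measurements: Let ρ be a density operator on (C²)^{⊗n}, and let D_z, D_x be the probability distributions obtained by measuring ρ in the computational and Hadamard bases respectively. Then for all subsets S, T ⊆ F₂^n, D_x(T) ≤ 2√(1 − D_z(S)) + √(|S|·|T|/2^n). -/

import Mathlib

/-!
Write `ρ = Cᴴ C`, so that the rows of `C` purify `ρ`. Let `P_S` zero out the columns outside `S`.
In the Frobenius norm, `D_z(S) = ‖C P_S‖²` and `D_x(T) = ‖C H P_T‖²`. Split
`C H P_T = C P_S H P_T + C P_Sᶜ H P_T`. Since `H` is unitary, the second term has norm at most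
`‖C P_Sᶜ‖ = √(1 - D_z(S))`. Every entry of `H` has modulus `2^(-n/2)`, so Cauchy–Schwarz bounds
the first term by `√(|S| |T| / 2ⁿ)`. Finally `‖C H P_T‖ ≤ ‖C‖ = 1`, so
`D_x(T) = ‖C H P_T‖² ≤ ‖C H P_T‖`, and the triangle inequality concludes.
-/

open ComplexOrder

/-- The `n`-qubit Hadamard transform `H^{⊗n}`, as a matrix indexed by bit strings. -/
noncomputable def hadamardN (n : ℕ) :
    Matrix (Fin n → ZMod 2) (Fin n → ZMod 2) ℂ :=
  fun x z => ((1 / Real.sqrt (2 ^ n) : ℝ) : ℂ) * (-1 : ℂ) ^ (∑ i, x i * z i : ZMod 2).val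

open Matrix

attribute [local instance] Matrix.frobeniusNormedAddCommGroup

namespace Matrix

variable {κ ι μ 𝕜 α : Type*}

section maskCols

variable [DecidableEq ι]

def maskCols [Zero α] (T : Finset ι) (A : Matrix κ ι α) : Matrix κ ι α :=
  of fun k j => if j ∈ T then A k j else 0

@[simp]
lemma maskCols_apply [Zero α] (T : Finset ι) (A : Matrix κ ι α) (k : κ) (j : ι) :
    maskCols T A k j = if j ∈ T then A k j else 0 := rfl

lemma maskCols_add [AddZeroClass α] (T : Finset ι) (A B : Matrix κ ι α) :
    maskCols T (A + B) = maskCols T A + maskCols T B := by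
  ext k j
  by_cases hj : j ∈ T <;> simp [hj]

lemma maskCols_add_maskCols_compl [Fintype ι] [AddZeroClass α] (T : Finset ι)
    (A : Matrix κ ι α) : maskCols T A + maskCols Tᶜ A = A := by
  ext k j
  by_cases hj : j ∈ T <;> simp [hj]

lemma maskCols_mul_apply [Fintype ι] [NonUnitalNonAssocSemiring α] (S : Finset ι)
    (A : Matrix κ ι α) (U : Matrix ι μ α) (k : κ) (x : μ) :
    (maskCols S A * U) k x = ∑ y ∈ S, A k y * U y x := by
  simp only [mul_apply, maskCols_apply, ite_mul, zero_mul, Finset.sum_ite_mem, Finset.univ_inter]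

end maskCols

variable [Fintype κ]

lemma re_conjTranspose_mul_self_apply_self [RCLike 𝕜] (A : Matrix κ ι 𝕜) (j : ι) :
    RCLike.re ((Aᴴ * A) j j) = ∑ k, ‖A k j‖ ^ 2 := by
  simp only [mul_apply, conjTranspose_apply, RCLike.star_def, RCLike.conj_mul, map_sum]
  norm_cast

variable [Fintype ι]

lemma frobenius_norm_sq [NormedAddCommGroup α] (A : Matrix κ ι α) :
    ‖A‖ ^ 2 = ∑ k, ∑ j, ‖A k j‖ ^ 2 := by
  rw [frobenius_norm_def, ← Real.sqrt_eq_rpow, Real.sq_sqrt (by positivity)]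
  simp_rw [Real.rpow_two]

section frobenius_maskCols

variable [DecidableEq ι] [NormedAddCommGroup α]

lemma frobenius_norm_maskCols_sq (T : Finset ι) (A : Matrix κ ι α) :
    ‖maskCols T A‖ ^ 2 = ∑ k, ∑ j ∈ T, ‖A k j‖ ^ 2 := by
  simp [frobenius_norm_sq, apply_ite, Finset.sum_ite_mem]

lemma frobenius_norm_maskCols_le (T : Finset ι) (A : Matrix κ ι α) : ‖maskCols T A‖ ≤ ‖A‖ := by
  refine (sq_le_sq₀ (norm_nonneg _) (norm_nonneg _)).mp ?_
  rw [frobenius_norm_maskCols_sq, frobenius_norm_sq]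
  exact Finset.sum_le_sum fun k _ => Finset.sum_le_sum_of_subset_of_nonneg (Finset.subset_univ T)
    fun _ _ _ => by positivity

lemma frobenius_norm_maskCols_compl_sq (T : Finset ι) (A : Matrix κ ι α) :
    ‖maskCols Tᶜ A‖ ^ 2 = ‖A‖ ^ 2 - ‖maskCols T A‖ ^ 2 := by
  rw [frobenius_norm_maskCols_sq, frobenius_norm_maskCols_sq, frobenius_norm_sq,
    ← Finset.sum_sub_distrib]
  exact Finset.sum_congr rfl fun k _ => by rw [← Finset.sum_compl_add_sum T, add_sub_cancel_right]

end frobenius_maskCols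

variable [RCLike 𝕜]

lemma sum_re_conjTranspose_mul_self_apply_self [DecidableEq ι] (T : Finset ι)
    (A : Matrix κ ι 𝕜) : ∑ j ∈ T, RCLike.re ((Aᴴ * A) j j) = ‖maskCols T A‖ ^ 2 := by
  rw [frobenius_norm_maskCols_sq, Finset.sum_comm]
  exact Finset.sum_congr rfl fun j _ => re_conjTranspose_mul_self_apply_self A j

lemma frobenius_norm_sq_eq_re_trace (A : Matrix κ ι 𝕜) :
    ‖A‖ ^ 2 = RCLike.re (Aᴴ * A).trace := by
  rw [frobenius_norm_sq, Finset.sum_comm, trace, map_sum]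
  exact Finset.sum_congr rfl fun j _ => (re_conjTranspose_mul_self_apply_self A j).symm

lemma frobenius_norm_mul_of_mul_conjTranspose_eq_one [DecidableEq ι] (A : Matrix κ ι 𝕜)
    {U : Matrix ι ι 𝕜} (hU : U * Uᴴ = 1) : ‖A * U‖ = ‖A‖ := by
  refine (sq_eq_sq₀ (norm_nonneg _) (norm_nonneg _)).mp ?_
  rw [frobenius_norm_sq_eq_re_trace, frobenius_norm_sq_eq_re_trace, conjTranspose_mul,
    Matrix.mul_assoc, trace_mul_comm, Matrix.mul_assoc, Matrix.mul_assoc, hU, Matrix.mul_one]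

lemma PosSemidef.exists_eq_conjTranspose_mul_self {n : Type*} [Fintype n] [DecidableEq n]
    {A : Matrix n n 𝕜} (hA : A.PosSemidef) : ∃ B : Matrix n n 𝕜, A = Bᴴ * B := by
  open MatrixOrder in
  exact CStarAlgebra.nonneg_iff_eq_star_mul_self.mp hA.nonneg

lemma frobenius_norm_maskCols_maskCols_mul_sq_le [Fintype μ] [DecidableEq ι] [DecidableEq μ]
    (S : Finset ι) (T : Finset μ) (A : Matrix κ ι 𝕜) {U : Matrix ι μ 𝕜} {c : ℝ}
    (hU : ∀ y x, ‖U y x‖ ^ 2 ≤ c) :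
    ‖maskCols T (maskCols S A * U)‖ ^ 2 ≤ c * S.card * T.card * ‖maskCols S A‖ ^ 2 := by
  have hentry : ∀ k x, ‖(maskCols S A * U) k x‖ ^ 2 ≤ c * S.card * ∑ y ∈ S, ‖A k y‖ ^ 2 := by
    intro k x
    have hUS : ∑ y ∈ S, ‖U y x‖ ^ 2 ≤ S.card * c := by
      simpa using Finset.sum_le_card_nsmul S _ c fun y _ => hU y x
    calc ‖(maskCols S A * U) k x‖ ^ 2
        ≤ (∑ y ∈ S, ‖A k y‖ * ‖U y x‖) ^ 2 := by
          rw [maskCols_mul_apply]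
          gcongr
          exact norm_sum_le_of_le S fun y _ => norm_mul_le _ _
      _ ≤ (∑ y ∈ S, ‖A k y‖ ^ 2) * ∑ y ∈ S, ‖U y x‖ ^ 2 := Finset.sum_mul_sq_le_sq_mul_sq _ _ _
      _ ≤ (∑ y ∈ S, ‖A k y‖ ^ 2) * (S.card * c) := by gcongr
      _ = c * S.card * ∑ y ∈ S, ‖A k y‖ ^ 2 := by ring
  rw [frobenius_norm_maskCols_sq, frobenius_norm_maskCols_sq, Finset.mul_sum]
  refine Finset.sum_le_sum fun k _ => ?_
  calc ∑ x ∈ T, ‖(maskCols S A * U) k x‖ ^ 2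
      ≤ ∑ _x ∈ T, c * S.card * ∑ y ∈ S, ‖A k y‖ ^ 2 := Finset.sum_le_sum fun x _ => hentry k x
    _ = _ := by rw [Finset.sum_const, nsmul_eq_mul]; ring

lemma frobenius_norm_maskCols_mul_sq_le [DecidableEq ι] {C : Matrix κ ι 𝕜} {U : Matrix ι ι 𝕜}
    (hC : ‖C‖ ≤ 1) (hU : U * Uᴴ = 1) {c : ℝ} (hUc : ∀ y x, ‖U y x‖ ^ 2 ≤ c) (S T : Finset ι) :
    ‖maskCols T (C * U)‖ ^ 2 ≤ √(c * S.card * T.card) * ‖maskCols S C‖ + ‖maskCols Sᶜ C‖ := by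
  have hsplit : maskCols T (C * U)
      = maskCols T (maskCols S C * U) + maskCols T (maskCols Sᶜ C * U) := by
    rw [← maskCols_add, ← Matrix.add_mul, maskCols_add_maskCols_compl]
  have hle_one : ‖maskCols T (C * U)‖ ≤ 1 :=
    (frobenius_norm_maskCols_le _ _).trans
      ((frobenius_norm_mul_of_mul_conjTranspose_eq_one C hU).trans_le hC)
  have hS : ‖maskCols T (maskCols S C * U)‖ ≤ √(c * S.card * T.card) * ‖maskCols S C‖ := by
    rw [← Real.sqrt_sq (norm_nonneg _), ← Real.sqrt_sq (norm_nonneg (maskCols S C)),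
      ← Real.sqrt_mul' _ (sq_nonneg _)]
    exact Real.sqrt_le_sqrt (frobenius_norm_maskCols_maskCols_mul_sq_le S T C hUc)
  have hSc : ‖maskCols T (maskCols Sᶜ C * U)‖ ≤ ‖maskCols Sᶜ C‖ :=
    (frobenius_norm_maskCols_le _ _).trans (frobenius_norm_mul_of_mul_conjTranspose_eq_one _ hU).le
  calc ‖maskCols T (C * U)‖ ^ 2 ≤ ‖maskCols T (C * U)‖ :=
        pow_le_of_le_one (norm_nonneg _) hle_one two_ne_zero
    _ ≤ _ := by
        rw [hsplit]
        exact (norm_add_le _ _).trans (add_le_add hS hSc)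

end Matrix

lemma AddChar.map_sum_eq_prod {A M ι : Type*} [AddCommMonoid A] [CommMonoid M] (ψ : AddChar A M)
    (s : Finset ι) (f : ι → A) : ψ (∑ i ∈ s, f i) = ∏ i ∈ s, ψ (f i) :=
  map_prod ψ.toMonoidHom (fun i => Multiplicative.ofAdd (f i)) s

lemma ZMod.two_cases (a : ZMod 2) : a = 0 ∨ a = 1 := by
  revert a; decide

def signChar : AddChar (ZMod 2) ℂ where
  toFun a := (-1) ^ a.val
  map_zero_eq_one' := rfl
  map_add_eq_mul' a b := by
    rcases ZMod.two_cases a with rfl | rfl <;> rcases ZMod.two_cases b with rfl | rfl <;>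
      simp [show (1 + 1 : ZMod 2) = 0 from rfl, ZMod.val_one]

lemma signChar_apply (a : ZMod 2) : signChar a = (-1) ^ a.val := rfl

lemma sum_signChar_mul (b : ZMod 2) : ∑ a, signChar (a * b) = if b = 0 then 2 else 0 := by
  rw [show (Finset.univ : Finset (ZMod 2)) = {0, 1} from rfl, Finset.sum_pair zero_ne_one]
  rcases ZMod.two_cases b with rfl | rfl <;>
    simp [signChar_apply, ZMod.val_one, one_add_one_eq_two]

lemma sum_signChar_dotProduct {n : ℕ} (w : Fin n → ZMod 2) :
    ∑ x : Fin n → ZMod 2, signChar (∑ i, x i * w i) = if w = 0 then 2 ^ n else 0 := by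
  simp_rw [AddChar.map_sum_eq_prod]
  rw [← Fintype.prod_sum (fun i a => signChar (a * w i))]
  simp_rw [sum_signChar_mul, Finset.prod_ite_zero, Finset.prod_const, Finset.card_univ,
    Fintype.card_fin, funext_iff]
  simp

section hadamardN

variable {n : ℕ}

lemma hadamardN_apply (x z : Fin n → ZMod 2) :
    hadamardN n x z = ((1 / √(2 ^ n) : ℝ) : ℂ) * signChar (∑ i, x i * z i) := rfl

lemma norm_hadamardN_apply_sq (x z : Fin n → ZMod 2) : ‖hadamardN n x z‖ ^ 2 = 1 / 2 ^ n := by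
  simp [hadamardN]

lemma hadamardN_conjTranspose : (hadamardN n)ᴴ = hadamardN n := by
  ext x z
  simp [hadamardN, mul_comm]

lemma hadamardN_mul_self : hadamardN n * hadamardN n = 1 := by
  ext y z
  have hterm : ∀ x, hadamardN n y x * hadamardN n x z
      = (1 / 2 ^ n : ℂ) * signChar (∑ i, x i * (y + z) i) := by
    intro x
    have hscalar : ((1 / √(2 ^ n) : ℝ) : ℂ) * ((1 / √(2 ^ n) : ℝ) : ℂ) = 1 / 2 ^ n := by
      rw [← Complex.ofReal_mul, ← sq, div_pow, Real.sq_sqrt (by positivity)]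
      push_cast; ring
    simp only [hadamardN_apply, Pi.add_apply, mul_add, Finset.sum_add_distrib,
      AddChar.map_add_eq_mul, mul_comm (y _) (x _), ← hscalar]
    ring
  rw [mul_apply, Finset.sum_congr rfl fun x _ => hterm x, ← Finset.mul_sum,
    sum_signChar_dotProduct, one_apply]
  simp [funext_iff, CharTwo.add_eq_zero]

lemma hadamardN_mul_conjTranspose : hadamardN n * (hadamardN n)ᴴ = 1 := by
  rw [hadamardN_conjTranspose, hadamardN_mul_self]

end hadamardN

/-- uncertainty relation for computational- and Hadamard-basis measurement
distributions of a density operator `ρ` on `n` qubits: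
`D_x(T) ≤ 2√(1 − D_z(S)) + √(|S|·|T|/2ⁿ)`. -/
theorem stmt9 {n : ℕ} (ρ : Matrix (Fin n → ZMod 2) (Fin n → ZMod 2) ℂ)
    (hρ : ρ.PosSemidef) (htr : ρ.trace = 1)
    (S T : Finset (Fin n → ZMod 2)) :
    ∑ x ∈ T, ((hadamardN n * ρ * hadamardN n) x x).re
      ≤ 2 * Real.sqrt (1 - ∑ y ∈ S, (ρ y y).re)
        + Real.sqrt ((S.card : ℝ) * T.card / 2 ^ n) := by
  obtain ⟨C, rfl⟩ := hρ.exists_eq_conjTranspose_mul_self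
  have hconj : hadamardN n * (Cᴴ * C) * hadamardN n
      = (C * hadamardN n)ᴴ * (C * hadamardN n) := by
    simp only [conjTranspose_mul, hadamardN_conjTranspose, Matrix.mul_assoc]
  have hC : ‖C‖ ^ 2 = 1 := by rw [frobenius_norm_sq_eq_re_trace, htr, RCLike.one_re]
  have hC_le : ‖C‖ ≤ 1 := (sq_le_one_iff₀ (norm_nonneg _)).mp hC.le
  have hDz : ∑ y ∈ S, ((Cᴴ * C) y y).re = ‖maskCols S C‖ ^ 2 :=
    sum_re_conjTranspose_mul_self_apply_self S C
  have hDx : ∑ x ∈ T, ((hadamardN n * (Cᴴ * C) * hadamardN n) x x).re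
      = ‖maskCols T (C * hadamardN n)‖ ^ 2 := by
    rw [hconj]; exact sum_re_conjTranspose_mul_self_apply_self T (C * hadamardN n)
  have hSc : √(1 - ‖maskCols S C‖ ^ 2) = ‖maskCols Sᶜ C‖ := by
    rw [← hC, ← frobenius_norm_maskCols_compl_sq, Real.sqrt_sq (norm_nonneg _)]
  rw [hDx, hDz, hSc]
  calc ‖maskCols T (C * hadamardN n)‖ ^ 2
      ≤ √(1 / 2 ^ n * S.card * T.card) * ‖maskCols S C‖ + ‖maskCols Sᶜ C‖ :=
        frobenius_norm_maskCols_mul_sq_le hC_le hadamardN_mul_conjTranspose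
          (fun y x => (norm_hadamardN_apply_sq y x).le) S T
    _ ≤ √(1 / 2 ^ n * S.card * T.card) * 1 + 2 * ‖maskCols Sᶜ C‖ := by
        gcongr
        · exact (frobenius_norm_maskCols_le S C).trans hC_le
        · linarith [norm_nonneg (maskCols Sᶜ C)]
    _ = 2 * ‖maskCols Sᶜ C‖ + √(S.card * T.card / 2 ^ n) := by ring_nf
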